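/- arXiv:1706.06937 — 5 statements merged into one kernel-verified Lean document; each statement's English description precedes it below -/
import Mathlib

section
/- Let F be the free group with basis {a₁,…,a_m, ā₁,…,ā_m}, let 𝓜(𝒜) be the free monoid on the alphabet {a₁^{±1},…,a_m^{±1}}, and for n ≥ 1 let N_n be the normal closure in F of {[u, ū] : u ∈ 𝓜(𝒜), |u| ≤ n}. Then for all non-empty words α, ε, β ∈ 𝓜(𝒜) with |α| + |ε| + |β| = n+1, the element [βεα, (βεα)‾] lies in N_n if and only if the element [[ᾱ⁻¹, β], ε ε̄⁻¹] lies in N_n. -/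
/-- A word in the free monoid `𝓜(𝒜)` on the alphabet `{a₁^{±1}, …, a_m^{±1}}`:
a list of letters, each a generator index together with a sign (`true` = positive). -/
abbrev MWord (m : ℕ) := List (Fin m × Bool)

/-- The image of a word `w ∈ 𝓜(𝒜)` in the free group `F` on `{a₁,…,a_m,ā₁,…,ā_m}`
(the `ā`'s correspond to the second summand of `Fin m ⊕ Fin m`). -/
def evalWord {m : ℕ} (w : MWord m) : FreeGroup (Fin m ⊕ Fin m) :=
  (w.map fun p =>
    if p.2 then FreeGroup.of (Sum.inl p.1) else (FreeGroup.of (Sum.inl p.1))⁻¹).prod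

/-- The image of the word `w̄` (each `a_i^{±1}` replaced by `ā_i^{±1}`) in `F`. -/
def evalBarWord {m : ℕ} (w : MWord m) : FreeGroup (Fin m ⊕ Fin m) :=
  (w.map fun p =>
    if p.2 then FreeGroup.of (Sum.inr p.1) else (FreeGroup.of (Sum.inr p.1))⁻¹).prod

/-- `□_w = [w, w̄] = w⁻¹ w̄⁻¹ w w̄`, computed in `F`. -/
def sqWord {m : ℕ} (w : MWord m) : FreeGroup (Fin m ⊕ Fin m) :=
  (evalWord w)⁻¹ * (evalBarWord w)⁻¹ * evalWord w * evalBarWord w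

/-- The set `{[u, ū] : u ∈ 𝓜(𝒜), |u| ≤ n}`. -/
def sqSet (m n : ℕ) : Set (FreeGroup (Fin m ⊕ Fin m)) :=
  {x | ∃ u : MWord m, u.length ≤ n ∧ x = sqWord u}


/-- The commutator `[x, y] = x⁻¹ y⁻¹ x y` (the convention of the paper). -/
def pComm {G : Type*} [Group G] (x y : G) : G := x⁻¹ * y⁻¹ * x * y

/-!
Modulo `N_n` every word of length at most `n` commutes with its barred copy; here this applies
to `α, β, ε, βε, βα, εα`. In any group, if `X` commutes with `x` and `Y` with `y`, then
`[YX, yx]` is conjugate to `[x⁻¹, Y] [y, X⁻¹]`; so if moreover `YX` commutes with `yx`, then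
`[x⁻¹, Y] = [X⁻¹, y]`. Applying the first fact to `(βε)·α` and rewriting the two factors with
the commutator product rules and the second fact (for `βα` and `εα`) leaves, up to conjugacy,
`[[ᾱ⁻¹, β], ε ε̄⁻¹]`.
-/

section Commutator

variable {G : Type*} [Group G]

theorem pComm_inv (x y : G) : (pComm x y)⁻¹ = pComm y x := by
  simp only [pComm]; group

theorem pComm_eq_one_iff {x y : G} : pComm x y = 1 ↔ Commute x y := by
  rw [show pComm x y = (y * x)⁻¹ * (x * y) by simp only [pComm]; group, inv_mul_eq_one,
    eq_comm]
  rfl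

theorem pComm_mul_left (x y z : G) : pComm (x * y) z = y⁻¹ * pComm x z * y * pComm y z := by
  simp only [pComm]; group

theorem pComm_mul_right (x y z : G) : pComm x (y * z) = pComm x z * z⁻¹ * pComm x y * z := by
  simp only [pComm]; group

theorem isConj_pComm_mul_mul {X x Y y : G} (hX : Commute X x) (hY : Commute Y y) :
    IsConj (pComm (Y * X) (y * x)) (pComm x⁻¹ Y * pComm y X⁻¹) := by
  refine isConj_iff.2 ⟨x * X, ?_⟩
  have hX' : x * X⁻¹ = X⁻¹ * x := hX.inv_left.eq.symm
  have hY' : y⁻¹ * Y = Y * y⁻¹ := hY.symm.inv_left.eq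
  calc x * X * pComm (Y * X) (y * x) * (x * X)⁻¹
      = x * Y⁻¹ * x⁻¹ * (y⁻¹ * Y) * X * y * (x * X⁻¹) * x⁻¹ := by simp only [pComm]; group
    _ = pComm x⁻¹ Y * pComm y X⁻¹ := by rw [hX', hY']; simp only [pComm]; group

theorem pComm_inv_eq_of_commute_mul {X x Y y : G} (hX : Commute X x) (hY : Commute Y y)
    (hYX : Commute (Y * X) (y * x)) : pComm x⁻¹ Y = pComm X⁻¹ y := by
  have h := isConj_one_left.1 ((pComm_eq_one_iff.2 hYX) ▸ isConj_pComm_mul_mul hX hY).symm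
  rw [← pComm_inv y, ← mul_eq_one_iff_eq_inv.1 h]

theorem isConj_pComm_mul_mul_mul {A B E a b e : G} (hA : Commute A a) (hB : Commute B b)
    (hE : Commute E e) (hBE : Commute (B * E) (b * e)) (hBA : Commute (B * A) (b * a))
    (hEA : Commute (E * A) (e * a)) :
    IsConj (pComm (B * E * A) (b * e * a)) (pComm (pComm a⁻¹ B) (E * e⁻¹)) := by
  have hB' := pComm_inv_eq_of_commute_mul hA hB hBA
  have hE' := pComm_inv_eq_of_commute_mul hA hE hEA
  refine (isConj_pComm_mul_mul hA hBE).trans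
    (isConj_iff.2 ⟨(E * e⁻¹)⁻¹ * (pComm a⁻¹ B)⁻¹ * E * (pComm a⁻¹ E)⁻¹, ?_⟩)
  rw [pComm_mul_right a⁻¹ B E, pComm_mul_left b e A⁻¹, ← pComm_inv A⁻¹ b, ← pComm_inv A⁻¹ e,
    ← hB', ← hE']
  simp only [pComm]; group

theorem IsConj.eq_one_iff {x y : G} (h : IsConj x y) : x = 1 ↔ y = 1 :=
  ⟨fun hx => isConj_one_right.1 (hx ▸ h), fun hy => isConj_one_left.1 (hy ▸ h)⟩

end Commutator

section Words

variable {m : ℕ}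

theorem evalWord_append (u v : MWord m) : evalWord (u ++ v) = evalWord u * evalWord v := by
  simp [evalWord]

theorem evalBarWord_append (u v : MWord m) :
    evalBarWord (u ++ v) = evalBarWord u * evalBarWord v := by
  simp [evalBarWord]

theorem commute_mk_of_length_le {n : ℕ} {u : MWord m} (hu : u.length ≤ n) :
    Commute (evalWord u : FreeGroup (Fin m ⊕ Fin m) ⧸ Subgroup.normalClosure (sqSet m n))
      (evalBarWord u) :=
  pComm_eq_one_iff.1 <| by
    simpa only [sqWord, pComm, QuotientGroup.mk_mul, QuotientGroup.mk_inv] using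
      (QuotientGroup.eq_one_iff (sqWord u)).2
        (Subgroup.subset_normalClosure (s := sqSet m n) ⟨u, hu, rfl⟩)

theorem commute_mk_mul_of_length_add_le {n : ℕ} {u v : MWord m}
    (huv : u.length + v.length ≤ n) :
    Commute ((evalWord u : FreeGroup (Fin m ⊕ Fin m) ⧸ Subgroup.normalClosure (sqSet m n)) *
      evalWord v) (evalBarWord u * evalBarWord v) := by
  simpa only [evalWord_append, evalBarWord_append, QuotientGroup.mk_mul] using
    commute_mk_of_length_le (u := u ++ v) (by rwa [List.length_append])

end Words

theorem sq_iff_comm_mem_normalClosure_general (m n : ℕ) (α ε β : MWord m)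
    (hα : α ≠ []) (hε : ε ≠ []) (hβ : β ≠ [])
    (hlen : α.length + ε.length + β.length = n + 1) :
    sqWord (β ++ ε ++ α) ∈ Subgroup.normalClosure (sqSet m n) ↔
      pComm (pComm (evalBarWord α)⁻¹ (evalWord β)) (evalWord ε * (evalBarWord ε)⁻¹) ∈
        Subgroup.normalClosure (sqSet m n) := by
  have hα1 := List.length_pos_iff.2 hα
  have hε1 := List.length_pos_iff.2 hε
  have hβ1 := List.length_pos_iff.2 hβ
  have key := isConj_pComm_mul_mul_mul
    (commute_mk_of_length_le (n := n) (u := α) (by omega))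
    (commute_mk_of_length_le (n := n) (u := β) (by omega))
    (commute_mk_of_length_le (n := n) (u := ε) (by omega))
    (commute_mk_mul_of_length_add_le (u := β) (v := ε) (by omega))
    (commute_mk_mul_of_length_add_le (u := β) (v := α) (by omega))
    (commute_mk_mul_of_length_add_le (u := ε) (v := α) (by omega))
  rw [← QuotientGroup.eq_one_iff, ← QuotientGroup.eq_one_iff, sqWord, evalWord_append,
    evalWord_append, evalBarWord_append, evalBarWord_append]
  simpa only [pComm, QuotientGroup.mk_mul, QuotientGroup.mk_inv] using key.eq_one_iff

/-- **Lemma 1.2.** For non-empty words `α, ε, β ∈ 𝓜(𝒜)` with `|α| + |ε| + |β| = n + 1`,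
`□_{βεα} = 1 mod □((n))` if and only if `[[ᾱ⁻¹, β], ε ε̄⁻¹] = 1 mod □((n))`. -/
theorem sq_iff_comm_mem_normalClosure (m n : ℕ) (hn : 1 ≤ n) (α ε β : MWord m)
    (hα : α ≠ []) (hε : ε ≠ []) (hβ : β ≠ [])
    (hlen : α.length + ε.length + β.length = n + 1) :
    sqWord (β ++ ε ++ α) ∈ Subgroup.normalClosure (sqSet m n) ↔
      pComm (pComm (evalBarWord α)⁻¹ (evalWord β)) (evalWord ε * (evalBarWord ε)⁻¹) ∈
        Subgroup.normalClosure (sqSet m n) :=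
  sq_iff_comm_mem_normalClosure_general m n α ε β hα hε hβ hlen
end

section
/- Let Γ be a group and let C be a central subgroup of Γ. If the quotient group Γ/C is finitely generated and the abelianization Γ/[Γ,Γ] is finitely generated, then Γ is finitely generated. -/
/-!
Lift finitely many generators of `Γ/C` to a subgroup `H` with `H C = Γ`. Since `C` is central,
the commutator of `h c` and `h' c'` is that of `h` and `h'`, so `[Γ,Γ] ≤ H`. Lifting finitely many
generators of the abelianization to `K` gives `K [Γ,Γ] = Γ`, hence `Γ = ⟨H, K⟩`.
-/

open Subgroup
open scoped commutatorElement Pointwise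

lemma commutatorElement_mul_mul_of_mem_center {G : Type*} [Group G] (g g' : G) {c c' : G}
    (hc : c ∈ center G) (hc' : c' ∈ center G) : ⁅g * c, g' * c'⁆ = ⁅g, g'⁆ := by
  rw [mem_center_iff] at hc hc'
  calc ⁅g * c, g' * c'⁆ = g * (c * g') * (c' * (c⁻¹ * g⁻¹)) * c'⁻¹ * g'⁻¹ := by group
    _ = g * (g' * c) * (c⁻¹ * g⁻¹ * c') * c'⁻¹ * g'⁻¹ := by rw [← hc g', ← hc' (c⁻¹ * g⁻¹)]
    _ = ⁅g, g'⁆ := by group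

lemma commutator_le_of_sup_eq_top_of_le_center {G : Type*} [Group G] {H C : Subgroup G}
    [C.Normal] (hC : C ≤ center G) (hHC : H ⊔ C = ⊤) : commutator G ≤ H := by
  have hmem (g : G) : g ∈ (H : Set G) * C := by rw [← mul_normal, hHC]; exact mem_top g
  rw [commutator_def, commutator_le]
  intro g _ g' _
  obtain ⟨h, hh, c, hc, rfl⟩ := hmem g
  obtain ⟨h', hh', c', hc', rfl⟩ := hmem g'
  rw [commutatorElement_mul_mul_of_mem_center h h' (hC hc) (hC hc')]
  exact commutator_le_self H (commutator_mem_commutator hh hh')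

lemma exists_fg_sup_ker_eq_top {G Q : Type*} [Group G] [Group Q] {f : G →* Q}
    (hf : Function.Surjective f) (hQ : Group.FG Q) :
    ∃ H : Subgroup G, H.FG ∧ H ⊔ f.ker = ⊤ := by
  obtain ⟨S, hS, hSfin⟩ := Group.fg_iff.mp hQ
  refine ⟨closure (Function.surjInv hf '' S), (fg_iff _).mpr ⟨_, rfl, hSfin.image _⟩, ?_⟩
  have hmap : (closure (Function.surjInv hf '' S)).map f = f.range := by
    rw [MonoidHom.map_closure, ← Set.image_comp, (Function.rightInverse_surjInv hf).comp_eq_id,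
      Set.image_id, hS, MonoidHom.range_eq_top.mpr hf]
  exact codisjoint_iff.mp (map_eq_range_iff.mp hmap)

/-- **Lemma 2.3.** If `C` is a central subgroup of `Γ` such that `Γ/C` and the
abelianization `Γ/[Γ,Γ]` are finitely generated, then `Γ` is finitely generated. -/
theorem fg_of_central_quotient_fg (Γ : Type*) [Group Γ] (C : Subgroup Γ)
    (hC : C ≤ Subgroup.center Γ) [C.Normal]
    (hQ : Group.FG (Γ ⧸ C)) (hAb : Group.FG (Abelianization Γ)) :
    Group.FG Γ := by
  obtain ⟨H, hHfg, hHC⟩ := exists_fg_sup_ker_eq_top (QuotientGroup.mk'_surjective C) hQ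
  obtain ⟨K, hKfg, hK⟩ := 
    exists_fg_sup_ker_eq_top (f := Abelianization.of) QuotientGroup.mk_surjective hAb
  rw [QuotientGroup.ker_mk'] at hHC
  rw [Abelianization.ker_of] at hK
  have hcomm : commutator Γ ≤ H := commutator_le_of_sup_eq_top_of_le_center hC hHC
  have hHK : H ⊔ K = ⊤ := top_unique (hK ▸ sup_le le_sup_right (hcomm.trans le_sup_left))
  exact Group.fg_def.mpr (hHK ▸ hHfg.sup hKfg)
end

section
/- Let G be a finitely generated group. Then the subgroup L(G) of 𝔛(G) is finitely generated. -/
open Monoid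

def weakCommRel (G : Type*) [Group G] : Set (Monoid.Coprod G G) :=
  {x | ∃ g : G, x = (Coprod.inl g)⁻¹ * (Coprod.inr g)⁻¹ * Coprod.inl g * Coprod.inr g}

def SidkiX (G : Type*) [Group G] : Type _ :=
  Monoid.Coprod G G ⧸ Subgroup.normalClosure (weakCommRel G)

instance (G : Type*) [Group G] : Group (SidkiX G) :=
  inferInstanceAs (Group (Monoid.Coprod G G ⧸ Subgroup.normalClosure (weakCommRel G)))

/-- The canonical projection `G ∗ Ḡ → 𝔛(G)`. -/
def SidkiX.mk (G : Type*) [Group G] : Monoid.Coprod G G →* SidkiX G :=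
  QuotientGroup.mk' (Subgroup.normalClosure (weakCommRel G))

/-- The homomorphism `𝔛(G) → G` sending both `g` and `ḡ` to `g`. -/
def SidkiX.proj (G : Type*) [Group G] : SidkiX G →* G :=
  QuotientGroup.lift _ (Coprod.lift (MonoidHom.id G) (MonoidHom.id G)) (by
    intro x hx
    refine Subgroup.normalClosure_le_normal ?_ hx
    rintro _ ⟨g, rfl⟩
    simp [MonoidHom.mem_ker, Coprod.lift_apply_inl, Coprod.lift_apply_inr, mul_assoc])

/-- The normal subgroup `L(G) = ker(𝔛(G) → G)`. -/
def SidkiL (G : Type*) [Group G] : Subgroup (SidkiX G) :=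
  (SidkiX.proj G).ker

/-! In `𝔛(G)` put `δ g = g⁻¹ ḡ`. Weak commutativity of `h` and of `g h` gives
`δ (g h) = ḡ δ(h) g⁻¹`, from which `δ (g h g) = δ(g) δ(h) δ(g)`, and conjugation by `G` acts on
`δ` by `c⁻¹ δ(g) c = δ(g c) δ(c)⁻¹`. The latter shows that `L(G)` is generated by all `δ g`.
Fix a finite symmetric generating set `T` and let `M j` be generated by the `δ w` for words `w`
over `T` of length at most `j`; conjugating by a letter moves `M j` into `M (j + 1)`. A word
longer than `|T|` repeats a letter, `w = U a V a W`, and expanding `δ (U · a V a · W)` with the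
identities above puts `δ w` into `M (|w| - 1)`. Hence the chain `M j` stabilises at `j = |T|`,
and `L(G) = M |T|` has finitely many generators. -/

theorem List.Duplicate.exists_eq_append {α : Type*} {x : α} {l : List α} (h : l.Duplicate x) :
    ∃ U V W : List α, l = U ++ x :: (V ++ x :: W) := by
  induction h with
  | cons_mem hx =>
    obtain ⟨V, W, rfl⟩ := List.append_of_mem hx
    exact ⟨[], V, W, rfl⟩
  | @cons_duplicate y _ _ ih =>
    obtain ⟨U, V, W, rfl⟩ := ih
    exact ⟨y :: U, V, W, rfl⟩

theorem Subgroup.inv_mul_mul_mem_of_mem_closure {K : Type*} [Group K] {s : Set K}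
    {H : Subgroup K} (c : K) (hs : ∀ x ∈ s, c⁻¹ * x * c ∈ H) {x : K}
    (hx : x ∈ Subgroup.closure s) : c⁻¹ * x * c ∈ H := by
  have : Subgroup.closure s ≤ H.comap (MulAut.conj c⁻¹).toMonoidHom :=
    (Subgroup.closure_le _).2 fun y hy => by simpa using hs y hy
  simpa using this hx

namespace SidkiX

variable {G : Type*} [Group G]

def inl : G →* SidkiX G := (SidkiX.mk G).comp Coprod.inl

def inr : G →* SidkiX G := (SidkiX.mk G).comp Coprod.inr

def delta (g : G) : SidkiX G := (inl g)⁻¹ * inr g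

@[simp]
theorem proj_inl (g : G) : SidkiX.proj G (inl g) = g := rfl

@[simp]
theorem proj_inr (g : G) : SidkiX.proj G (inr g) = g := rfl

theorem commute_inl_inr (g : G) : Commute (inl g) (inr g) := by
  have h : SidkiX.mk G ((Coprod.inl g)⁻¹ * (Coprod.inr g)⁻¹ * Coprod.inl g * Coprod.inr g) = 1 :=
    (QuotientGroup.eq_one_iff _).mpr (Subgroup.subset_normalClosure ⟨g, rfl⟩)
  simp only [map_mul, map_inv] at h
  rw [← Commute.inv_inv_iff, ← commutatorElement_eq_one_iff_commute, commutatorElement_def,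
    inv_inv, inv_inv]
  exact h

theorem delta_mem_sidkiL (g : G) : delta g ∈ SidkiL G := by
  simp [SidkiL, delta]

theorem delta_mul (g h : G) : delta (g * h) = (inl h)⁻¹ * delta g * inl h * delta h := by
  simp only [delta, map_mul]
  group

theorem inl_inv_mul_delta_mul_inl (g c : G) :
    (inl c)⁻¹ * delta g * inl c = delta (g * c) * (delta c)⁻¹ := by
  rw [delta_mul]
  group

theorem delta_mul_eq_inr_mul (g h : G) : delta (g * h) = inr g * delta h * (inl g)⁻¹ := by
  have hgh := (commute_inl_inr (g * h)).inv_left.eq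
  have hh := (commute_inl_inr h).inv_left.eq
  simp only [delta, map_mul, mul_inv_rev] at hgh ⊢
  calc (inl h)⁻¹ * (inl g)⁻¹ * (inr g * inr h)
      = inr g * inr h * ((inl h)⁻¹ * (inl g)⁻¹) := hgh
    _ = inr g * (inr h * (inl h)⁻¹) * (inl g)⁻¹ := by group
    _ = inr g * ((inl h)⁻¹ * inr h) * (inl g)⁻¹ := by rw [hh]

theorem delta_mul_eq_delta_mul_conj (g h : G) : delta (g * h) = delta g * (inl g * delta h * (inl g)⁻¹) := by
  rw [delta_mul_eq_inr_mul]
  simp only [delta]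
  rw [(commute_inl_inr g).inv_left.eq]
  group

theorem delta_sandwich (g h : G) : delta (g * h * g) = delta g * delta h * delta g := by
  have : delta (g * h * g) = (inl g)⁻¹ * delta (g * h) * inr g := by
    simp only [delta, map_mul]
    group
  rw [this, delta_mul_eq_inr_mul]
  simp only [delta]
  group

variable (G) in
def deltaClosure : Subgroup (SidkiX G) :=
  Subgroup.closure (Set.range delta)

theorem inl_inv_mul_mul_inl_mem_deltaClosure (c : G) {x : SidkiX G}
    (hx : x ∈ deltaClosure G) : (inl c)⁻¹ * x * inl c ∈ deltaClosure G := by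
  refine Subgroup.inv_mul_mul_mem_of_mem_closure _ ?_ hx
  rintro _ ⟨g, rfl⟩
  rw [inl_inv_mul_delta_mul_inl]
  exact mul_mem (Subgroup.subset_closure ⟨g * c, rfl⟩) (inv_mem (Subgroup.subset_closure ⟨c, rfl⟩))

theorem inl_proj_inv_mul_self_mem_deltaClosure (x : SidkiX G) :
    (inl (SidkiX.proj G x))⁻¹ * x ∈ deltaClosure G := by
  obtain ⟨y, rfl⟩ := QuotientGroup.mk'_surjective _ x
  change (inl (SidkiX.proj G (SidkiX.mk G y)))⁻¹ * SidkiX.mk G y ∈ deltaClosure G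
  induction y using Coprod.induction_on with
  | inl g =>
    change (inl (SidkiX.proj G (inl g)))⁻¹ * inl g ∈ deltaClosure G
    simp [one_mem]
  | inr g => exact Subgroup.subset_closure ⟨g, rfl⟩
  | mul y z hy hz =>
    set a := SidkiX.proj G (SidkiX.mk G y)
    set b := SidkiX.proj G (SidkiX.mk G z)
    have : (inl (SidkiX.proj G (SidkiX.mk G (y * z))))⁻¹ * SidkiX.mk G (y * z)
        = (inl b)⁻¹ * ((inl a)⁻¹ * SidkiX.mk G y) * inl b * ((inl b)⁻¹ * SidkiX.mk G z) := by
      simp only [a, b, map_mul]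
      group
    rw [this]
    exact mul_mem (inl_inv_mul_mul_inl_mem_deltaClosure b hy) hz

theorem sidkiL_eq_deltaClosure : SidkiL G = deltaClosure G := by
  refine le_antisymm (fun x hx => ?_) ((Subgroup.closure_le _).2 ?_)
  · simpa [(SidkiX.proj G).mem_ker.1 hx] using inl_proj_inv_mul_self_mem_deltaClosure x
  · rintro _ ⟨g, rfl⟩
    exact delta_mem_sidkiL g

section Words

variable (T : Set G)

def closureDeltaWords (j : ℕ) : Subgroup (SidkiX G) :=
  Subgroup.closure ((fun w : List T => delta (w.map (↑)).prod) '' {w | w.length ≤ j})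

variable {T}

theorem delta_mem_closureDeltaWords {w : List T} {j : ℕ} (hw : w.length ≤ j) :
    delta (w.map (↑)).prod ∈ closureDeltaWords T j :=
  Subgroup.subset_closure ⟨w, hw, rfl⟩

theorem closureDeltaWords_mono : Monotone (closureDeltaWords T) :=
  fun _ _ hjk => Subgroup.closure_mono (Set.image_mono fun _ hw => le_trans hw hjk)

theorem inl_inv_mul_mul_inl_mem (t : T) {j : ℕ} {x : SidkiX G}
    (hx : x ∈ closureDeltaWords T j) :
    (inl (t : G))⁻¹ * x * inl (t : G) ∈ closureDeltaWords T (j + 1) := by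
  refine Subgroup.inv_mul_mul_mem_of_mem_closure _ ?_ hx
  rintro _ ⟨w, hw, rfl⟩
  rw [inl_inv_mul_delta_mul_inl]
  have hwt : delta ((w ++ [t]).map (↑)).prod ∈ closureDeltaWords T (j + 1) :=
    delta_mem_closureDeltaWords (by simpa using hw)
  have ht : delta ([t].map (↑)).prod ∈ closureDeltaWords T (j + 1) :=
    delta_mem_closureDeltaWords (by simp)
  simp only [List.map_append, List.map_cons, List.map_nil, List.prod_append,
    List.prod_cons, List.prod_nil, mul_one] at hwt ht
  exact mul_mem hwt (inv_mem ht)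

theorem inl_mul_mul_inl_inv_mem (hT : ∀ t ∈ T, t⁻¹ ∈ T) (t : T) {j : ℕ} {x : SidkiX G}
    (hx : x ∈ closureDeltaWords T j) :
    inl (t : G) * x * (inl (t : G))⁻¹ ∈ closureDeltaWords T (j + 1) := by
  simpa using inl_inv_mul_mul_inl_mem ⟨(t : G)⁻¹, hT t t.2⟩ hx

theorem inl_prod_inv_mul_mul_inl_prod_mem (W : List T) {j : ℕ} {x : SidkiX G}
    (hx : x ∈ closureDeltaWords T j) :
    (inl (W.map (↑)).prod)⁻¹ * x * inl (W.map (↑)).prod ∈ closureDeltaWords T (j + W.length) := by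
  induction W generalizing j x with
  | nil => simpa using hx
  | cons t W ih =>
    have := ih (inl_inv_mul_mul_inl_mem t hx)
    simp only [List.map_cons, List.prod_cons, map_mul, mul_inv_rev, List.length_cons]
    rw [← add_assoc, add_right_comm]
    convert this using 1
    group

theorem inl_prod_mul_mul_inl_prod_inv_mem (hT : ∀ t ∈ T, t⁻¹ ∈ T) (U : List T) {j : ℕ} {x : SidkiX G}
    (hx : x ∈ closureDeltaWords T j) :
    inl (U.map (↑)).prod * x * (inl (U.map (↑)).prod)⁻¹ ∈ closureDeltaWords T (j + U.length) := by
  induction U generalizing j x with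
  | nil => simpa using hx
  | cons t U ih =>
    have := inl_mul_mul_inl_inv_mem hT t (ih hx)
    simp only [List.map_cons, List.prod_cons, map_mul, mul_inv_rev, List.length_cons]
    rw [← add_assoc]
    convert this using 1
    group

theorem delta_mem_of_eq_append (hT : ∀ t ∈ T, t⁻¹ ∈ T) (U V W : List T) (a : T) :
    delta ((U ++ a :: (V ++ a :: W)).map (↑)).prod
      ∈ closureDeltaWords T (U.length + V.length + W.length + 1) := by
  let π : List T → G := fun w => (w.map (↑)).prod
  have hπ : ((U ++ a :: (V ++ a :: W)).map (↑)).prod = π U * (a * π V * a * π W) := by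
    simp only [π, List.map_append, List.map_cons, List.prod_append, List.prod_cons]
    group
  have ha : delta (a : G) ∈ closureDeltaWords T (V.length + 1) := by
    simpa using delta_mem_closureDeltaWords (T := T) (w := [a]) (by simp)
  have hR : delta (a * π V * a) ∈ closureDeltaWords T (V.length + 1) := by
    rw [delta_sandwich]
    exact mul_mem (mul_mem ha (delta_mem_closureDeltaWords (by omega))) ha
  have hRW : delta (a * π V * a * π W) ∈ closureDeltaWords T (V.length + 1 + W.length) := by
    rw [delta_mul]
    exact mul_mem (inl_prod_inv_mul_mul_inl_prod_mem W hR) (delta_mem_closureDeltaWords (by omega))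
  rw [hπ, delta_mul_eq_delta_mul_conj]
  refine mul_mem (delta_mem_closureDeltaWords (by omega)) ?_
  exact closureDeltaWords_mono (by omega) (inl_prod_mul_mul_inl_prod_inv_mem hT U hRW)

variable [Finite T]

theorem closureDeltaWords_succ_le (hT : ∀ t ∈ T, t⁻¹ ∈ T) {j : ℕ} (hj : Nat.card T ≤ j) :
    closureDeltaWords T (j + 1) ≤ closureDeltaWords T j := by
  refine (Subgroup.closure_le _).2 ?_
  rintro _ ⟨w, hw, rfl⟩
  by_cases hwj : w.length ≤ j
  · exact delta_mem_closureDeltaWords hwj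
  have hdup : ¬ w.Nodup := fun hnd => by have := hnd.length_le_natCard; omega
  obtain ⟨a, ha⟩ := List.exists_duplicate_iff_not_nodup.2 hdup
  obtain ⟨U, V, W, rfl⟩ := ha.exists_eq_append
  refine closureDeltaWords_mono ?_ (delta_mem_of_eq_append hT U V W a)
  simp only [Set.mem_ofPred_eq, List.length_append, List.length_cons] at hw
  omega

theorem closureDeltaWords_le_card (hT : ∀ t ∈ T, t⁻¹ ∈ T) (j : ℕ) :
    closureDeltaWords T j ≤ closureDeltaWords T (Nat.card T) := by
  induction j with
  | zero => exact closureDeltaWords_mono (Nat.zero_le _)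
  | succ j ih =>
    by_cases hj : Nat.card T ≤ j
    · exact (closureDeltaWords_succ_le hT hj).trans ih
    · exact closureDeltaWords_mono (by omega)

theorem closureDeltaWords_card_eq_sidkiL (hT : ∀ t ∈ T, t⁻¹ ∈ T)
    (hgen : Submonoid.closure T = ⊤) : closureDeltaWords T (Nat.card T) = SidkiL G := by
  rw [sidkiL_eq_deltaClosure]
  refine le_antisymm (Subgroup.closure_mono (Set.image_subset_iff.2 fun w _ => ⟨_, rfl⟩))
    ((Subgroup.closure_le _).2 ?_)
  rintro _ ⟨g, rfl⟩
  obtain ⟨l, hl, rfl⟩ := Submonoid.exists_list_of_mem_closure (hgen ▸ Submonoid.mem_top g)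
  lift l to List T using hl
  exact closureDeltaWords_le_card hT l.length (delta_mem_closureDeltaWords le_rfl)

end Words

end SidkiX

/-- **Proposition 2.4.** If `G` is finitely generated then `L(G)` is finitely generated. -/
theorem sidkiL_fg (G : Type*) [Group G] (hG : Group.FG G) : (SidkiL G).FG := by
  obtain ⟨S, hS, hSfin⟩ := Group.fg_iff.1 hG
  have : Finite ↥(S ∪ S⁻¹) := (hSfin.union hSfin.inv).to_subtype
  have hT : ∀ t ∈ S ∪ S⁻¹, t⁻¹ ∈ S ∪ S⁻¹ := fun t ht => by
    simpa [or_comm] using ht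
  have hgen : Submonoid.closure (S ∪ S⁻¹) = ⊤ := by
    rw [← Subgroup.closure_toSubmonoid, hS]
    rfl
  rw [Subgroup.fg_iff, ← SidkiX.closureDeltaWords_card_eq_sidkiL hT hgen]
  exact ⟨_, rfl, (List.finite_length_le _ _).image _⟩
end

section
/- Let G be a group generated by two elements a and b, and let P be the subgroup of G × G generated by the set {(g, g⁻¹) : g ∈ G}. Then P is generated by the three elements (a, a⁻¹), (b, b⁻¹) and (ab, (ab)⁻¹). -/
/-!
Let `H` be the subgroup generated by the three elements and `N = {c | (1, c) ∈ H}` (Mathlib's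
`H.goursatSnd`). As `a⁻¹` and `b⁻¹` generate `G`, `H` projects onto the second factor, so `N` is
normal. It contains `⁅b, a⁆`, the second coordinate of `((a, a⁻¹) * (b, b⁻¹))⁻¹ * (ab, (ab)⁻¹)`,
hence the whole commutator subgroup of the two-generated group `G`. Then
`(xy, (xy)⁻¹) = (x, x⁻¹) * (y, y⁻¹) * (1, ⁅y, x⁆)` shows that the `g` with `(g, g⁻¹) ∈ H` are closed
under products.
-/

open scoped commutatorElement

namespace Subgroup

variable {G : Type*} [Group G]

theorem isMulCommutative_of_closure_eq_top {s : Set G} (hs : closure s = ⊤)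
    (hcomm : ∀ x ∈ s, ∀ y ∈ s, x * y = y * x) : IsMulCommutative G := by
  have hcent : closure s ≤ centralizer s := (closure_le _).2 fun x hx y hy => hcomm y hy x hx
  rw [← centralizer_closure, hs] at hcent
  exact ⟨⟨fun x y => hcent (mem_top y) x (mem_top x)⟩⟩

theorem commutator_le_of_closure_pair_eq_top {a b : G} (hab : closure {a, b} = ⊤)
    (N : Subgroup G) [N.Normal] (h : ⁅a, b⁆ ∈ N) : _root_.commutator G ≤ N := by
  rw [← Normal.quotient_commutative_iff_commutator_le]
  have hcomm : Commute (a : G ⧸ N) (b : G ⧸ N) := by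
    have := (QuotientGroup.eq_one_iff (N := N) _).2 h
    rwa [← QuotientGroup.mk'_apply, map_commutatorElement,
      commutatorElement_eq_one_iff_commute] at this
  refine isMulCommutative_of_closure_eq_top (s := QuotientGroup.mk' N '' {a, b}) ?_ ?_
  · rw [← MonoidHom.map_closure, hab, ← MonoidHom.range_eq_map, MonoidHom.range_eq_top]
    exact QuotientGroup.mk'_surjective N
  · simp only [Set.image_insert_eq, Set.image_singleton, Set.mem_insert_iff,
      Set.mem_singleton_iff, QuotientGroup.mk'_apply]
    rintro x (rfl | rfl) y (rfl | rfl)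
    exacts [rfl, hcomm, hcomm.symm, rfl]

theorem surjective_snd_of_forall_mem_antidiagonal {H : Subgroup (G × G)} {s : Set G}
    (hs : closure s = ⊤) (hmem : ∀ x ∈ s, (x, x⁻¹) ∈ H) :
    Function.Surjective (Prod.snd ∘ H.subtype) := by
  intro g
  have hle : closure s ≤ H.map (MonoidHom.snd G G) :=
    (closure_le _).2 fun x hx => ⟨(x, x⁻¹)⁻¹, inv_mem (hmem x hx), by simp⟩
  obtain ⟨p, hp, rfl⟩ := hle (hs ▸ mem_top g)
  exact ⟨⟨p, hp⟩, rfl⟩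

theorem mem_antidiagonal_of_commutator_le_goursatSnd {H : Subgroup (G × G)}
    (hH : _root_.commutator G ≤ H.goursatSnd) {s : Set G} (hs : closure s = ⊤)
    (hmem : ∀ x ∈ s, (x, x⁻¹) ∈ H) (g : G) : (g, g⁻¹) ∈ H := by
  induction hs ▸ mem_top g using closure_induction with
  | mem x hx => exact hmem x hx
  | one => rw [inv_one]; exact H.one_mem
  | mul x y _ _ hx hy =>
    have hyx : ((1 : G), ⁅y, x⁆) ∈ H :=
      mem_goursatSnd.1 (hH (commutator_mem_commutator (mem_top y) (mem_top x)))
    convert mul_mem (mul_mem hx hy) hyx using 1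
    ext <;> simp only [commutatorElement_def, Prod.fst_mul, Prod.snd_mul] <;> group
  | inv x _ hx => simpa using inv_mem hx

end Subgroup

open Subgroup in
/-- **Lemma 2.6.** If `G` is generated by `{a, b}`, then the subgroup
`P = ⟨(g, g⁻¹) : g ∈ G⟩` of `G × G` is generated by `(a, a⁻¹)`, `(b, b⁻¹)` and
`(ab, (ab)⁻¹)`. -/
theorem fiber_product_three_generators {G : Type*} [Group G] (a b : G)
    (hab : Subgroup.closure {a, b} = ⊤) :
    Subgroup.closure {p : G × G | ∃ g : G, p = (g, g⁻¹)} =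
      Subgroup.closure {(a, a⁻¹), (b, b⁻¹), (a * b, (a * b)⁻¹)} := by
  set H := closure {(a, a⁻¹), (b, b⁻¹), (a * b, (a * b)⁻¹)}
  have ha : (a, a⁻¹) ∈ H := subset_closure (by simp)
  have hb : (b, b⁻¹) ∈ H := subset_closure (by simp)
  have hgen : ∀ x ∈ ({a, b} : Set G), (x, x⁻¹) ∈ H := by
    rintro x (rfl | rfl) <;> assumption
  have := normal_goursatSnd (surjective_snd_of_forall_mem_antidiagonal hab hgen)
  have hba : ⁅b, a⁆ ∈ H.goursatSnd := by
    rw [mem_goursatSnd]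
    convert mul_mem (inv_mem (mul_mem ha hb)) (subset_closure (by simp) : (a * b, (a * b)⁻¹) ∈ H)
      using 1
    ext <;> simp only [commutatorElement_def, Prod.fst_mul, Prod.snd_mul, Prod.fst_inv,
      Prod.snd_inv] <;> group
  have hcomm := commutator_le_of_closure_pair_eq_top (Set.pair_comm a b ▸ hab) _ hba
  refine le_antisymm ((closure_le _).2 ?_) ((closure_le _).2 ?_)
  · rintro _ ⟨g, rfl⟩
    exact mem_antidiagonal_of_commutator_le_goursatSnd hcomm hab hgen g
  · rintro p (rfl | rfl | rfl) <;> exact subset_closure ⟨_, rfl⟩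
end

section
/- Let F be a free group of finite rank, let R be a normal subgroup of F, and let G = F/R. Then the following are equivalent: (i) there exist a finitely presented group H and a surjective group homomorphism H → G whose kernel is perfect (equal to its own commutator subgroup); (ii) there exist finitely many elements r₁,…,r_m ∈ R such that R is generated by [R,R] together with the normal closure of {r₁,…,r_m} in F. -/
/-- A group is finitely presented if it is isomorphic to the quotient of a free group of
finite rank by the normal closure of a finite set. -/
def IsFinitelyPresented (G : Type*) [Group G] : Prop :=
  ∃ (n : ℕ) (S : Finset (FreeGroup (Fin n))),
    Nonempty ((FreeGroup (Fin n) ⧸ Subgroup.normalClosure (S : Set (FreeGroup (Fin n)))) ≃* G)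

/-!
(ii) ⇒ (i): with `N` the normal closure of the `rᵢ`, take `H = F/N`. The kernel of `F/N → F/R`
is the image of `R = [R, R] ⊔ N`, which is the image of `[R, R]`, hence perfect.

(i) ⇒ (ii): write `H = F'/N` with `F'` free of finite rank and `N` finitely normally generated.
Pulling back the perfect kernel of `H → G` shows that `ψ : F' → G` has
`ker ψ = [ker ψ, ker ψ] ⊔ N`. As free groups are projective there are `α : F → F'` and
`β : F' → F` over `G`. Then `R` is generated modulo `[R, R]` as a normal subgroup by the images
under `β` of the relators of `H` together with the elements `x⁻¹ β (α x)` for the basis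
elements `x` of `F`: the endomorphism `β ∘ α` of `F` is the identity modulo these, since it is
so on a generating set.
-/

open Subgroup

theorem FreeGroup.exists_comp_eq_of_surjective {X B G : Type*} [Group B] [Group G]
    (π : FreeGroup X →* G) {ψ : B →* G} (hψ : Function.Surjective ψ) :
    ∃ α : FreeGroup X →* B, ψ.comp α = π :=
  ⟨FreeGroup.lift (Function.surjInv hψ ∘ π ∘ FreeGroup.of),
    FreeGroup.ext_hom _ _ fun x => by simp [Function.surjInv_eq hψ]⟩

theorem isFinitelyPresented_quotient_normalClosure {k : ℕ} {s : Set (FreeGroup (Fin k))}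
    (hs : s.Finite) : IsFinitelyPresented (FreeGroup (Fin k) ⧸ normalClosure s) :=
  ⟨k, hs.toFinset, ⟨QuotientGroup.quotientMulEquivOfEq (by rw [Set.Finite.coe_toFinset])⟩⟩

section

variable {A B G : Type*} [Group A] [Group B] [Group G]

theorem Subgroup.map_commutator_eq_self_of_eq_commutator_sup {R N : Subgroup A} (φ : A →* B)
    (hN : N ≤ φ.ker) (hR : R = ⁅R, R⁆ ⊔ N) : ⁅R.map φ, R.map φ⁆ = R.map φ := by
  conv_rhs => rw [hR]
  rw [Subgroup.map_sup, (map_eq_bot_iff N).mpr hN, sup_bot_eq, map_commutator]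

theorem MonoidHom.ker_comp_eq_commutator_sup_ker {q : A →* B} (hq : Function.Surjective q)
    {φ : B →* G} (hφ : ⁅φ.ker, φ.ker⁆ = φ.ker) :
    (φ.comp q).ker = ⁅(φ.comp q).ker, (φ.comp q).ker⁆ ⊔ q.ker := by
  rw [← comap_map_eq, map_commutator, ← MonoidHom.comap_ker,
    map_comap_eq_self_of_surjective hq, hφ]

theorem Subgroup.inv_mul_mem_normalClosure_of_closure_eq_top {X : Set A} (hX : closure X = ⊤)
    (θ : A →* A) (g : A) : g⁻¹ * θ g ∈ normalClosure ((fun x => x⁻¹ * θ x) '' X) := by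
  set N := normalClosure ((fun x => x⁻¹ * θ x) '' X)
  have hθ : (QuotientGroup.mk' N).comp θ = QuotientGroup.mk' N :=
    MonoidHom.eq_of_eqOn_dense hX fun x hx => Eq.symm <|
      (QuotientGroup.eq (s := N)).mpr (subset_normalClosure (Set.mem_image_of_mem _ hx))
  exact (QuotientGroup.eq (s := N)).mp (DFunLike.congr_fun hθ g).symm

theorem MonoidHom.ker_eq_commutator_sup_normalClosure_of_lifts {π : A →* G} {ψ : B →* G}
    {α : A →* B} {β : B →* A} (hα : ψ.comp α = π) (hβ : π.comp β = ψ) {X : Set A}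
    (hX : closure X = ⊤) {T : Set B} (hT : ψ.ker = ⁅ψ.ker, ψ.ker⁆ ⊔ normalClosure T) :
    π.ker = ⁅π.ker, π.ker⁆ ⊔ normalClosure (β '' T ∪ (fun x => x⁻¹ * β (α x)) '' X) := by
  set M := ⁅π.ker, π.ker⁆ ⊔ normalClosure (β '' T ∪ (fun x => x⁻¹ * β (α x)) '' X)
  have hβker : ψ.ker.map β ≤ π.ker := by
    rw [map_le_iff_le_comap, MonoidHom.comap_ker, hβ]
  have hβM : ψ.ker.map β ≤ M := by
    rw [hT, Subgroup.map_sup, map_commutator]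
    refine sup_le_sup (commutator_mono hβker hβker) ((map_normalClosure_le T β).trans ?_)
    exact normalClosure_mono Set.subset_union_left
  have hdisplacement (g : A) : g⁻¹ * β (α g) ∈ M :=
    mem_sup_right <| normalClosure_mono Set.subset_union_right <|
      inv_mul_mem_normalClosure_of_closure_eq_top hX (β.comp α) g
  refine le_antisymm (fun g hg => ?_) (sup_le (commutator_le_left _ _) ?_)
  · have hαg : α g ∈ ψ.ker := by
      rwa [MonoidHom.mem_ker, ← MonoidHom.comp_apply, hα]
    simpa using M.mul_mem (hβM ⟨α g, hαg, rfl⟩) (M.inv_mem (hdisplacement g))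
  · refine normalClosure_le_normal (Set.union_subset ?_ ?_)
    · exact Set.image_subset_iff.mpr fun t ht =>
        hβker ⟨t, hT ▸ mem_sup_right (subset_normalClosure ht), rfl⟩
    · rintro _ ⟨x, -, rfl⟩
      rw [SetLike.mem_coe, MonoidHom.mem_ker, map_mul, map_inv, ← MonoidHom.comp_apply π β,
        hβ, ← MonoidHom.comp_apply ψ α, hα, inv_mul_cancel]

theorem MonoidHom.exists_finite_ker_eq_commutator_sup_normalClosure {X Y : Type*} [Finite X]
    {π : FreeGroup X →* G} (hπ : Function.Surjective π) {ψ : FreeGroup Y →* G}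
    (hψ : Function.Surjective ψ) {T : Set (FreeGroup Y)} (hT : T.Finite)
    (hψker : ψ.ker = ⁅ψ.ker, ψ.ker⁆ ⊔ normalClosure T) :
    ∃ T' : Set (FreeGroup X), T'.Finite ∧ π.ker = ⁅π.ker, π.ker⁆ ⊔ normalClosure T' := by
  obtain ⟨α, hα⟩ := FreeGroup.exists_comp_eq_of_surjective π hψ
  obtain ⟨β, hβ⟩ := FreeGroup.exists_comp_eq_of_surjective ψ hπ
  exact ⟨_, (hT.image β).union ((Set.finite_range (FreeGroup.of (α := X))).image _),
    ker_eq_commutator_sup_normalClosure_of_lifts hα hβ (FreeGroup.closure_range_of X) hψker⟩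

theorem IsFinitelyPresented.exists_free_ker_eq_commutator_sup_normalClosure {H : Type*}
    [Group H] (hH : IsFinitelyPresented H) {f : H →* G} (hf : Function.Surjective f)
    (hperf : ⁅f.ker, f.ker⁆ = f.ker) :
    ∃ (n : ℕ) (ψ : FreeGroup (Fin n) →* G) (T : Set (FreeGroup (Fin n))), T.Finite ∧
      Function.Surjective ψ ∧ ψ.ker = ⁅ψ.ker, ψ.ker⁆ ⊔ normalClosure T := by
  obtain ⟨n, S, ⟨e⟩⟩ := hH
  let q : FreeGroup (Fin n) →* H :=
    (e : FreeGroup (Fin n) ⧸ normalClosure (S : Set _) →* H).comp (QuotientGroup.mk' _)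
  have hq : Function.Surjective q := e.surjective.comp (QuotientGroup.mk'_surjective _)
  refine ⟨n, f.comp q, S, S.finite_toSet, hf.comp hq, ?_⟩
  have hker := MonoidHom.ker_comp_eq_commutator_sup_ker hq hperf
  rwa [MonoidHom.ker_mulEquiv_comp, QuotientGroup.ker_mk'] at hker

theorem QuotientGroup.commutator_ker_lift_eq_ker {N : Subgroup A} [N.Normal] {φ : A →* B}
    (hN : N ≤ φ.ker) (hφ : φ.ker = ⁅φ.ker, φ.ker⁆ ⊔ N) :
    ⁅(lift N φ hN).ker, (lift N φ hN).ker⁆ = (lift N φ hN).ker := by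
  rw [ker_lift]
  exact map_commutator_eq_self_of_eq_commutator_sup _ (ker_mk' N).ge hφ

end

/-- **Lemma 3.1.** Let `F` be a free group of finite rank, `R ⊴ F` and `G = F/R`. Then `G`
is the quotient of a finitely presented group by a perfect normal subgroup if and only if
there are finitely many elements `r₁, …, r_m ∈ R` such that `R` is generated by `[R, R]`
together with the normal closure of `{r₁, …, r_m}` in `F`  (i.e. `G` has type `FP₂`). -/
theorem FP2_characterization (k : ℕ) (R : Subgroup (FreeGroup (Fin k))) [R.Normal] :
    (∃ (H : Type) (_ : Group H) (f : H →* FreeGroup (Fin k) ⧸ R),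
        IsFinitelyPresented H ∧ Function.Surjective f ∧ ⁅f.ker, f.ker⁆ = f.ker) ↔
      (∃ (m : ℕ) (r : Fin m → FreeGroup (Fin k)), (∀ i, r i ∈ R) ∧
        R = ⁅R, R⁆ ⊔ Subgroup.normalClosure (Set.range r)) := by
  constructor
  · rintro ⟨H, _, f, hH, hf, hperf⟩
    obtain ⟨n, ψ, T, hT, hψ, hψker⟩ :=
      hH.exists_free_ker_eq_commutator_sup_normalClosure hf hperf
    obtain ⟨T', hT', hR⟩ := MonoidHom.exists_finite_ker_eq_commutator_sup_normalClosure
      (QuotientGroup.mk'_surjective R) hψ hT hψker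
    rw [QuotientGroup.ker_mk'] at hR
    obtain ⟨m, r, -, rfl⟩ := hT'.fin_param
    refine ⟨m, r, fun i => ?_, hR⟩
    rw [hR]
    exact mem_sup_right (subset_normalClosure (Set.mem_range_self i))
  · rintro ⟨m, r, hrR, hR⟩
    rw [← QuotientGroup.ker_mk' R] at hrR hR
    have hN : normalClosure (Set.range r) ≤ (QuotientGroup.mk' R).ker :=
      normalClosure_le_normal (Set.range_subset_iff.mpr hrR)
    exact ⟨_, _, QuotientGroup.lift _ _ hN,
      isFinitelyPresented_quotient_normalClosure (Set.finite_range r),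
      QuotientGroup.lift_surjective_of_surjective _ _ (QuotientGroup.mk'_surjective R) hN,
      QuotientGroup.commutator_ker_lift_eq_ker hN hR⟩
end
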